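/- With f defined as above from rationals 0 < q_0 < ... < q_{n-1} < 1 (n ≥ 1), f is an injection from the set of strings over an n-symbol alphabet into ℚ ∩ [0, 1). -/

import Mathlib

/-!
Each `q i` with gap `q (i+1) - q i` defines an increasing affine map of `[0, 1)` onto
`[q i, q (i+1))`, and `opef q (a :: w)` is the image of `opef q w` under the map of `a`.
So `opef q` takes values in `[0, 1)`, strings with different first letters land in disjoint
intervals ordered like the letters, and the empty string goes to `0 < q 0`. Hence `opef q`
is strictly monotone for the lexicographic order, which is total, so it is injective.
-/

def opef {n : ℕ} (q : Fin (n + 1) → ℚ) : List (Fin n) → ℚ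
  | [] => 0
  | a :: w => q a.castSucc + (q a.succ - q a.castSucc) * opef q w

lemma add_sub_mul_mem_Ico {K : Type*} [Field K] [LinearOrder K] [IsStrictOrderedRing K]
    {lo hi x : K} (hlohi : lo < hi) (hx : x ∈ Set.Ico (0 : K) 1) :
    lo + (hi - lo) * x ∈ Set.Ico lo hi := by
  obtain ⟨hx0, hx1⟩ := hx
  have hgap : 0 < hi - lo := sub_pos.mpr hlohi
  constructor <;> nlinarith

section

variable {n : ℕ} {q : Fin (n + 1) → ℚ}

lemma opef_cons_mem_Ico (hq : StrictMono q) (a : Fin n) {w : List (Fin n)}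
    (hw : opef q w ∈ Set.Ico 0 1) :
    opef q (a :: w) ∈ Set.Ico (q a.castSucc) (q a.succ) :=
  add_sub_mul_mem_Ico (hq Fin.castSucc_lt_succ) hw

lemma opef_mem_Ico (hq : StrictMono q) (h0 : 0 ≤ q 0) (hlast : q (Fin.last n) ≤ 1)
    (w : List (Fin n)) : opef q w ∈ Set.Ico 0 1 := by
  induction w with
  | nil => exact ⟨le_rfl, zero_lt_one⟩
  | cons a w ih =>
    have hsub : Set.Ico (q a.castSucc) (q a.succ) ⊆ Set.Ico 0 1 :=
      Set.Ico_subset_Ico (h0.trans (hq.monotone (Fin.zero_le _)))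
        ((hq.monotone (Fin.le_last _)).trans hlast)
    exact hsub (opef_cons_mem_Ico hq a ih)

lemma opef_strictMono (hq : StrictMono q) (h0 : 0 < q 0) (hlast : q (Fin.last n) ≤ 1) :
    StrictMono (opef q) := by
  have hcons := fun a w => opef_cons_mem_Ico hq a (opef_mem_Ico hq h0.le hlast w)
  intro w v hwv
  induction hwv with
  | @nil a v =>
    calc opef q [] = 0 := rfl
      _ < q 0 := h0
      _ ≤ q a.castSucc := hq.monotone (Fin.zero_le _)
      _ ≤ opef q (a :: v) := (hcons a v).1
  | @cons a _ _ _ ih =>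
    have hgap : 0 < q a.succ - q a.castSucc := sub_pos.mpr (hq Fin.castSucc_lt_succ)
    simp only [opef]
    gcongr
  | @rel a _ b _ hab =>
    calc opef q (a :: _) < q a.succ := (hcons a _).2
      _ ≤ q b.castSucc := hq.monotone (Fin.succ_le_castSucc_iff.mpr hab)
      _ ≤ opef q (b :: _) := (hcons b _).1

end

theorem opef_injective_general
    {n : ℕ} (q : Fin (n + 1) → ℚ)
    (hq : StrictMono q) (h0 : 0 < q 0) (hlast : q (Fin.last n) = 1) :
    Function.Injective (opef q) ∧
    ∀ str : List (Fin n), 0 ≤ opef q str ∧ opef q str < 1 :=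
  ⟨(opef_strictMono hq h0 hlast.le).injective, opef_mem_Ico hq h0.le hlast.le⟩

/-- `f` is an injection from strings over an `n`-symbol alphabet (`n ≥ 1`)
into `ℚ ∩ [0, 1)`: it is injective and takes values in `[0, 1)`. -/
theorem opef_injective
    {n : ℕ} (hn : 1 ≤ n) (q : Fin (n + 1) → ℚ)
    (hq : StrictMono q) (h0 : 0 < q 0) (hlast : q (Fin.last n) = 1) :
    Function.Injective (opef q) ∧
    ∀ str : List (Fin n), 0 ≤ opef q str ∧ opef q str < 1 :=
  opef_injective_general q hq h0 hlast
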